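/- For every natural number n, ∫₀¹ p_n(x) · N p_n(x) dx = 1 / ( (2n+1)(2n+2) ), where N p_n(x) = ∫₀ˣ (F(x) − F(t))/(x − t) dt and F(t) = ∫₀ᵗ p_n(u) du. -/

import Mathlib

/-!
Write `p_n = ∑ₖ cₖ Xᵏ` with `cₖ = (-1)^(n+k) C(n,k) C(n+k,n)`. Since
`(xᵏ⁺¹ - tᵏ⁺¹)/(x - t) = ∑ᵢ xⁱ tᵏ⁻ⁱ`, the operator acts on monomials by
`N(xᵏ) = H_{k+1}/(k+1) · xᵏ⁺¹` with `H` the harmonic numbers. Integrating by parts `n` times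
in Rodrigues' formula gives the moments `∫₀¹ p_n xᵐ = C(m,n) m! n!/(m+n+1)!`, which vanish for
`m < n`; hence only `k = n - 1` and `k = n` contribute to `∫₀¹ p_n · N p_n`, and the two
contributions add up to `(n+1)(H_{n+1} - H_n)/((2n+1)(2n+2)) = 1/((2n+1)(2n+2))`.
-/

open MeasureTheory intervalIntegral

/-- Shifted Legendre polynomial `p n x = (1/n!) dⁿ/dxⁿ (xⁿ(x-1)ⁿ)`. -/
noncomputable def shiftedLegendre (n : ℕ) : ℝ → ℝ :=
  fun x => (1 / (Nat.factorial n) : ℝ) * iteratedDeriv n (fun t : ℝ => t ^ n * (t - 1) ^ n) x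

open Finset
open Polynomial hiding shiftedLegendre
open scoped Polynomial Nat

lemma integral_pow_mul_one_sub_pow (a b : ℕ) :
    ∫ x in (0:ℝ)..1, x ^ a * (1 - x) ^ b = a ! * b ! / (a + b + 1)! := by
  have hbeta := Complex.betaIntegral_eval_nat_add_one_right (u := a + 1)
    (by simp only [Complex.add_re, Complex.natCast_re, Complex.one_re]; positivity) b
  have hint : Complex.betaIntegral (a + 1) (b + 1) =
      ((∫ x in (0:ℝ)..1, x ^ a * (1 - x) ^ b : ℝ) : ℂ) := by
    rw [← intervalIntegral.integral_ofReal]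
    simp only [Complex.betaIntegral, add_sub_cancel_right, Complex.cpow_natCast]
    push_cast; rfl
  have hprod : ∏ j ∈ range (b + 1), ((a + 1 : ℂ) + j) = ((a + 1).ascFactorial (b + 1) : ℕ) := by
    push_cast [Nat.ascFactorial_eq_prod_range]; rfl
  rw [hint, hprod] at hbeta
  have hfac : ((a + b + 1)! : ℝ) = a ! * (a + 1).ascFactorial (b + 1) := by
    rw [← Nat.cast_mul, Nat.factorial_mul_ascFactorial, add_assoc]
  have ha : (a ! : ℝ) ≠ 0 := by positivity
  rw [hfac, mul_div_mul_left _ _ ha]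
  exact Complex.ofReal_injective (by push_cast; exact hbeta)

section IntegrationByParts

variable {a b : ℝ}

lemma integral_eval_derivative_mul_eval {f : ℝ[X]} (g : ℝ[X]) (ha : f.eval a = 0)
    (hb : f.eval b = 0) :
    ∫ x in a..b, (derivative f).eval x * g.eval x =
      -∫ x in a..b, f.eval x * (derivative g).eval x := by
  have h := integral_mul_deriv_eq_deriv_mul (a := a) (b := b) (fun x _ => f.hasDerivAt x)
    (fun x _ => g.hasDerivAt x) ((derivative f).continuous.intervalIntegrable a b)
    ((derivative g).continuous.intervalIntegrable a b)
  rw [ha, hb, zero_mul, zero_mul, sub_zero, zero_sub] at h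
  rw [h, neg_neg]

lemma integral_eval_iterate_derivative_mul_eval {f : ℝ[X]} (g : ℝ[X]) (m : ℕ)
    (hf : ∀ j < m, (derivative^[j] f).eval a = 0 ∧ (derivative^[j] f).eval b = 0) :
    ∫ x in a..b, (derivative^[m] f).eval x * g.eval x =
      (-1) ^ m * ∫ x in a..b, f.eval x * (derivative^[m] g).eval x := by
  induction m generalizing g with
  | zero => simp
  | succ m ih =>
    obtain ⟨ha, hb⟩ := hf m m.lt_succ_self
    rw [Function.iterate_succ_apply', integral_eval_derivative_mul_eval g ha hb,
      ih (derivative g) (fun j hj => hf j (hj.trans m.lt_succ_self)),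
      Function.iterate_succ_apply, pow_succ]
    ring

end IntegrationByParts

lemma eval_iterate_derivative_eq_zero_of_pow_dvd {R : Type*} [CommRing R] {p : R[X]} {a : R}
    {n j : ℕ} (h : (X - C a) ^ n ∣ p) (hj : j < n) : (derivative^[j] p).eval a = 0 :=
  dvd_iff_isRoot.mp <| (dvd_pow_self _ (Nat.sub_ne_zero_of_lt hj)).trans
    (pow_sub_dvd_iterate_derivative_of_pow_dvd j h)

lemma iterate_deriv_eval_polynomial {𝕜 : Type*} [NontriviallyNormedField 𝕜] (p : 𝕜[X])
    (k : ℕ) : deriv^[k] (fun x => p.eval x) = fun x => (derivative^[k] p).eval x := by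
  induction k generalizing p with
  | zero => rfl
  | succ k ih =>
    have hp : deriv (fun x => p.eval x) = fun x => (derivative p).eval x :=
      funext fun _ => p.deriv
    rw [Function.iterate_succ_apply, hp, ih, Function.iterate_succ_apply]

lemma shiftedLegendre_eq_eval (n : ℕ) (x : ℝ) :
    shiftedLegendre n x =
      (n ! : ℝ)⁻¹ * (derivative^[n] (X ^ n * (X - 1) ^ n : ℝ[X])).eval x := by
  have h : (fun t : ℝ => t ^ n * (t - 1) ^ n) =
      fun t => (X ^ n * (X - 1) ^ n : ℝ[X]).eval t := by
    simp
  rw [shiftedLegendre, h, iteratedDeriv_eq_iterate, iterate_deriv_eval_polynomial, one_div]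

/-- Mathlib's `Polynomial.shiftedLegendre n` comes from Rodrigues' formula for `Xⁿ(1 - X)ⁿ`,
hence differs from `shiftedLegendre n` by the sign `(-1)ⁿ`. -/
lemma shiftedLegendre_eq_sum (n : ℕ) (x : ℝ) :
    shiftedLegendre n x =
      ∑ k ∈ range (n + 1), (-1) ^ (n + k) * n.choose k * (n + k).choose n * x ^ k := by
  have hrod := congrArg (map (Int.castRingHom ℝ)) (factorial_mul_shiftedLegendre_eq n)
  rw [← iterate_derivative_map] at hrod
  simp only [Polynomial.map_mul, Polynomial.map_natCast, Polynomial.map_pow, Polynomial.map_X,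
    Polynomial.map_sub, Polynomial.map_one] at hrod
  have hsign : (X ^ n * (X - 1) ^ n : ℝ[X]) = C ((-1) ^ n) * (X ^ n * (1 - X) ^ n) := by
    rw [← neg_sub (1 : ℝ[X]) X, neg_pow, map_pow, map_neg, map_one]
    ring
  have hn : (n ! : ℝ) ≠ 0 := by positivity
  rw [shiftedLegendre_eq_eval, hsign, iterate_derivative_C_mul, ← hrod, eval_mul, eval_C,
    eval_mul, eval_natCast, mul_left_comm, inv_mul_cancel_left₀ hn]
  simp [Polynomial.shiftedLegendre, Polynomial.map_sum, eval_finsetSum, mul_sum, pow_add,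
    mul_assoc]

lemma continuous_shiftedLegendre (n : ℕ) : Continuous (shiftedLegendre n) := by
  rw [funext (shiftedLegendre_eq_sum n)]
  fun_prop

lemma integral_shiftedLegendre_mul_pow (n m : ℕ) :
    ∫ x in (0:ℝ)..1, shiftedLegendre n x * x ^ m = m.choose n * m ! * n ! / (m + n + 1)! := by
  have hw : ∀ j < n, (derivative^[j] (X ^ n * (X - 1) ^ n : ℝ[X])).eval 0 = 0 ∧
      (derivative^[j] (X ^ n * (X - 1) ^ n : ℝ[X])).eval 1 = 0 := fun j hj =>
    ⟨eval_iterate_derivative_eq_zero_of_pow_dvd (by simp [dvd_mul_right]) hj,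
      eval_iterate_derivative_eq_zero_of_pow_dvd (by simp [dvd_mul_left]) hj⟩
  have hibp := integral_eval_iterate_derivative_mul_eval (X ^ m) n hw
  simp only [iterate_derivative_X_pow_eq_C_mul, eval_mul, eval_pow, eval_X, eval_C, eval_sub,
    eval_one] at hibp
  simp_rw [shiftedLegendre_eq_eval, mul_assoc, intervalIntegral.integral_const_mul, hibp]
  rcases lt_or_ge m n with hmn | hnm
  · simp [Nat.descFactorial_eq_zero_iff_lt.mpr hmn, Nat.choose_eq_zero_of_lt hmn]
  obtain ⟨j, rfl⟩ := Nat.exists_eq_add_of_le hnm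
  have hx : ∀ x : ℝ, x ^ n * (x - 1) ^ n * ((n + j).descFactorial n * x ^ (n + j - n)) =
      (-1) ^ n * (n + j).descFactorial n * (x ^ (n + j) * (1 - x) ^ n) := fun x => by
    rw [← neg_sub 1 x, neg_pow, Nat.add_sub_cancel_left]
    ring
  simp_rw [hx, intervalIntegral.integral_const_mul, integral_pow_mul_one_sub_pow,
    Nat.descFactorial_eq_factorial_mul_choose]
  push_cast
  field_simp
  rw [← pow_mul, Even.neg_one_pow ⟨n, by ring⟩, one_mul]

section DividedDifference

variable (n : ℕ) (x : ℝ)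

lemma integral_geom_sum₂ :
    ∫ t in (0:ℝ)..x, ∑ i ∈ range n, x ^ i * t ^ (n - 1 - i) = harmonic n * x ^ n := by
  rw [intervalIntegral.integral_finsetSum fun i _ =>
    (by fun_prop : Continuous fun t : ℝ => x ^ i * t ^ (n - 1 - i)).intervalIntegrable _ _]
  have hterm : ∀ i ∈ range n, ∫ t in (0:ℝ)..x, x ^ i * t ^ (n - 1 - i) =
      x ^ n * (((n - 1 - i : ℕ) : ℝ) + 1)⁻¹ := fun i hi => by
    have hi : i + (n - 1 - i + 1) = n := by have := mem_range.mp hi; omega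
    rw [intervalIntegral.integral_const_mul, integral_pow, ← hi]
    simp only [Nat.add_succ_sub_one, add_tsub_cancel_left, pow_add, pow_one, mul_zero, sub_zero,
      div_eq_mul_inv]
    ring
  rw [sum_congr rfl hterm, ← mul_sum, mul_comm, sum_range_reflect (fun j => ((j : ℝ) + 1)⁻¹) n]
  simp [harmonic]

lemma eqOn_divided_difference_pow :
    (Set.uIoo 0 x).EqOn (fun t => (x ^ n - t ^ n) / (x - t))
      (fun t => ∑ i ∈ range n, x ^ i * t ^ (n - 1 - i)) := fun t ht =>
  ((Commute.all x t).geom_sum₂ (ne_of_mem_of_not_mem ht Set.right_notMem_uIoo).symm n).symm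

lemma integral_divided_difference_pow :
    ∫ t in (0:ℝ)..x, (x ^ n - t ^ n) / (x - t) = harmonic n * x ^ n := by
  rw [integral_congr_uIoo (eqOn_divided_difference_pow n x), integral_geom_sum₂]

lemma intervalIntegrable_divided_difference_pow :
    IntervalIntegrable (fun t => (x ^ n - t ^ n) / (x - t)) volume 0 x :=
  IntervalIntegrable.congr_uIoo
    ((by fun_prop : Continuous fun t : ℝ => ∑ i ∈ range n, x ^ i * t ^ (n - 1 - i))
      |>.intervalIntegrable _ _)
    (eqOn_divided_difference_pow n x).symm

end DividedDifference

lemma integral_sum_mul_pow {ι : Type*} (s : Finset ι) (c : ι → ℝ) (d : ι → ℕ) (a b : ℝ) :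
    ∫ u in a..b, ∑ k ∈ s, c k * u ^ d k =
      ∑ k ∈ s, c k * ((b ^ (d k + 1) - a ^ (d k + 1)) / (d k + 1)) := by
  rw [intervalIntegral.integral_finsetSum fun k _ =>
    (by fun_prop : Continuous fun u : ℝ => c k * u ^ d k).intervalIntegrable _ _]
  simp_rw [intervalIntegral.integral_const_mul, integral_pow]

lemma integral_divided_difference_integral_sum_mul_pow (s : Finset ℕ) (c : ℕ → ℝ) (x : ℝ) :
    ∫ t in (0:ℝ)..x, ((∫ u in (0:ℝ)..x, ∑ k ∈ s, c k * u ^ k) -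
        ∫ u in (0:ℝ)..t, ∑ k ∈ s, c k * u ^ k) / (x - t) =
      ∑ k ∈ s, c k / (k + 1) * harmonic (k + 1) * x ^ (k + 1) := by
  have hsplit : ∀ t : ℝ, ((∫ u in (0:ℝ)..x, ∑ k ∈ s, c k * u ^ k) -
      ∫ u in (0:ℝ)..t, ∑ k ∈ s, c k * u ^ k) / (x - t) =
      ∑ k ∈ s, c k / (k + 1) * ((x ^ (k + 1) - t ^ (k + 1)) / (x - t)) := fun t => by
    rw [integral_sum_mul_pow, integral_sum_mul_pow, ← sum_sub_distrib, sum_div]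
    exact sum_congr rfl fun k _ => by ring
  simp_rw [hsplit]
  rw [intervalIntegral.integral_finsetSum fun k _ =>
    (intervalIntegrable_divided_difference_pow (k + 1) x).const_mul _]
  simp_rw [intervalIntegral.integral_const_mul, integral_divided_difference_pow, mul_assoc]

lemma sum_legendre_coeff_harmonic (n : ℕ) :
    ∑ k ∈ range (n + 1), (-1) ^ (n + k) * (n.choose k : ℝ) * (n + k).choose n / (k + 1) *
        harmonic (k + 1) * ((k + 1).choose n * (k + 1)! * n ! / (k + 1 + n + 1)!) =
      1 / ((2 * n + 1) * (2 * n + 2)) := by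
  rcases n with _ | p
  · norm_num [harmonic]
  have hlow : ∀ k ∈ range p, ((k + 1).choose (p + 1) : ℝ) = 0 := fun k hk => by
    rw [Nat.choose_eq_zero_of_lt (by have := mem_range.mp hk; omega), Nat.cast_zero]
  rw [sum_range_succ, sum_range_succ, sum_eq_zero fun k hk => by simp [hlow k hk], zero_add,
    harmonic_succ (p + 1)]
  simp only [Nat.choose_self, Nat.choose_succ_self_right]
  rw [Nat.cast_choose ℝ (Nat.le_add_right (p + 1) p),
    Nat.cast_choose ℝ (Nat.le_add_right (p + 1) (p + 1)), Nat.add_sub_cancel_left,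
    Nat.add_sub_cancel_left]
  simp only [show p + 1 + p = 2 * p + 1 by ring, show p + 1 + (p + 1) = 2 * p + 1 + 1 by ring,
    show p + 1 + 1 + (p + 1) = 2 * p + 1 + 1 + 1 by ring, pow_succ, pow_mul,
    Nat.factorial_succ]
  push_cast
  field_simp
  ring

theorem stmt15 (n : ℕ) :
    ∫ x in (0:ℝ)..1, shiftedLegendre n x *
        (∫ t in (0:ℝ)..x,
          ((∫ u in (0:ℝ)..x, shiftedLegendre n u) - ∫ u in (0:ℝ)..t, shiftedLegendre n u)
            / (x - t)) =
      1 / ((2 * (n : ℝ) + 1) * (2 * (n : ℝ) + 2)) := by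
  simp_rw [funext (shiftedLegendre_eq_sum n), integral_divided_difference_integral_sum_mul_pow,
    ← shiftedLegendre_eq_sum, mul_sum]
  have hcont := continuous_shiftedLegendre n
  rw [intervalIntegral.integral_finsetSum fun k _ =>
    (by fun_prop : Continuous _).intervalIntegrable _ _]
  simp_rw [mul_left_comm (shiftedLegendre n _), intervalIntegral.integral_const_mul,
    integral_shiftedLegendre_mul_pow]
  exact sum_legendre_coeff_harmonic n
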